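/- For every function a : ℕ → ℂ and all integers X, h with h ≥ 1 and X ≥ h + 2, one has | ∑_{l=1}^{h} (h+1−l) · 2 Re( ∑_{n=X+h}^{2X} a(n) · conj(a(n+l)) ) | ≤ ∑_{x=X}^{2X} | ∑_{n=x}^{x+h} a(n) |² + (h+1) ∑_{n=X}^{2X+h} |a(n)|² + 12 (h+1)³ · max_{X ≤ n ≤ 2X+h} |a(n)|². -/

import Mathlib

open Finset

namespace Stmt8Aux

/-- The real part of `a m * conj (a n)`. -/
noncomputable def g (a : ℕ → ℂ) (m n : ℕ) : ℝ := (a m * (starRingEnd ℂ) (a n)).re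

/-- The counting weight: the number of `x ∈ [X, 2X]` whose window `[x, x+h]`
contains both `m` and `n`. -/
def c (X h m n : ℕ) : ℕ :=
  ((Icc X (2*X)).filter (fun x => m ∈ Icc x (x+h) ∧ n ∈ Icc x (x+h))).card

lemma g_symm (a : ℕ → ℂ) (m n : ℕ) : g a m n = g a n m := by
  unfold g
  rw [show a m * (starRingEnd ℂ) (a n) = (starRingEnd ℂ) (a n * (starRingEnd ℂ) (a m)) by
    rw [map_mul]; ring_nf; simp [mul_comm]]
  exact Complex.conj_re _

lemma g_diag (a : ℕ → ℂ) (n : ℕ) : g a n n = ‖a n‖ ^ 2 := by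
  unfold g
  rw [Complex.mul_conj, Complex.ofReal_re, Complex.sq_norm]

lemma g_abs_le (a : ℕ → ℂ) (m n : ℕ) :
    |g a m n| ≤ ‖a m‖ * ‖a n‖ := by
  unfold g
  calc |(a m * (starRingEnd ℂ) (a n)).re| ≤ ‖a m * (starRingEnd ℂ) (a n)‖ :=
        Complex.abs_re_le_norm _
    _ = ‖a m‖ * ‖a n‖ := by rw [norm_mul, Complex.norm_conj]

lemma c_symm (X h m n : ℕ) : c X h m n = c X h n m := by
  unfold c; congr 1
  apply Finset.filter_congr; intro x _; tauto

lemma c_le (X h m n : ℕ) : c X h m n ≤ h + 1 := by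
  unfold c
  calc _ ≤ (Icc (m - h) m).card := by
        apply Finset.card_le_card
        intro x hx
        simp only [mem_filter, mem_Icc] at hx ⊢
        omega
    _ ≤ h + 1 := by rw [Nat.card_Icc]; omega

lemma c_zero (X h m n : ℕ) (hn : m + h < n ∨ 2*X + h < n) : c X h m n = 0 := by
  unfold c
  rw [Finset.card_eq_zero, Finset.filter_eq_empty_iff]
  intro x hx
  simp only [mem_Icc] at hx ⊢
  omega

lemma c_main (X h : ℕ) (l : ℕ) (hl : l ∈ Icc 1 h) (m : ℕ)
    (hm : m ∈ Icc (X+h) (2*X)) : c X h m (m+l) = h + 1 - l := by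
  simp only [mem_Icc] at hl hm
  unfold c
  have : (Icc X (2*X)).filter (fun x => m ∈ Icc x (x+h) ∧ m + l ∈ Icc x (x+h))
      = Icc (m + l - h) m := by
    ext x
    simp only [mem_filter, mem_Icc]
    omega
  rw [this, Nat.card_Icc]
  omega

lemma F_symm (a : ℕ → ℂ) (X h m n : ℕ) :
    (c X h m n : ℝ) * g a m n = (c X h n m : ℝ) * g a n m := by
  rw [c_symm, g_symm]

lemma step1 (a : ℕ → ℂ) (X h : ℕ) :
    ∑ x ∈ Icc X (2*X), (‖∑ n ∈ Icc x (x+h), a n‖)^2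
      = ∑ m ∈ Icc X (2*X+h), ∑ n ∈ Icc X (2*X+h), (c X h m n : ℝ) * g a m n := by
  have key : ∀ x ∈ Icc X (2*X), (‖∑ n ∈ Icc x (x+h), a n‖)^2
      = ∑ m ∈ Icc X (2*X+h), ∑ n ∈ Icc X (2*X+h),
          (if m ∈ Icc x (x+h) ∧ n ∈ Icc x (x+h) then g a m n else 0) := by
    intro x hx
    simp only [mem_Icc] at hx
    have hsub : Icc x (x+h) ⊆ Icc X (2*X+h) := by
      intro n hn; simp only [mem_Icc] at hn ⊢; omega
    have h1 : (‖∑ n ∈ Icc x (x+h), a n‖)^2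
        = ∑ m ∈ Icc x (x+h), ∑ n ∈ Icc x (x+h), g a m n := by
      rw [Complex.sq_norm]
      rw [show (Complex.normSq (∑ n ∈ Icc x (x+h), a n))
          = ((∑ m ∈ Icc x (x+h), a m) * (starRingEnd ℂ) (∑ n ∈ Icc x (x+h), a n)).re by
            rw [Complex.mul_conj, Complex.ofReal_re]]
      rw [map_sum, Finset.sum_mul_sum, Complex.re_sum]
      exact Finset.sum_congr rfl fun m _ => Complex.re_sum _ _
    rw [h1]
    calc ∑ m ∈ Icc x (x+h), ∑ n ∈ Icc x (x+h), g a m n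
        = ∑ m ∈ Icc X (2*X+h),
            (if m ∈ Icc x (x+h) then ∑ n ∈ Icc x (x+h), g a m n else 0) := by
          rw [Finset.sum_ite_mem, Finset.inter_eq_right.mpr hsub]
      _ = _ := by
          refine Finset.sum_congr rfl fun m _ => ?_
          split_ifs with hm
          · simp only [hm, true_and]
            rw [Finset.sum_ite_mem, Finset.inter_eq_right.mpr hsub]
          · simp [hm]
  rw [Finset.sum_congr rfl key, Finset.sum_comm]
  refine Finset.sum_congr rfl fun m _ => ?_
  rw [Finset.sum_comm]
  refine Finset.sum_congr rfl fun n _ => ?_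
  rw [← Finset.sum_filter, Finset.sum_const, nsmul_eq_mul]
  rfl

lemma step2 (a : ℕ → ℂ) (X h : ℕ) :
    ∑ m ∈ Icc X (2*X+h), ∑ n ∈ Icc X (2*X+h), (c X h m n : ℝ) * g a m n
      = (∑ n ∈ Icc X (2*X+h), (c X h n n : ℝ) * g a n n)
        + 2 * ∑ l ∈ Icc 1 h, ∑ m ∈ Icc X (2*X+h), (c X h m (m+l) : ℝ) * g a m (m+l) := by
  set J := Icc X (2*X+h) with hJ
  have tri : ∀ m ∈ J, ∀ n ∈ J, (c X h m n : ℝ) * g a m n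
      = (if n < m then (c X h m n : ℝ) * g a m n else 0)
        + (if m = n then (c X h m n : ℝ) * g a m n else 0)
        + (if m < n then (c X h m n : ℝ) * g a m n else 0) := by
    intro m _ n _
    rcases Nat.lt_trichotomy m n with hmn | hmn | hmn
    · simp [hmn, Nat.lt_asymm hmn, Nat.ne_of_lt hmn]
    · subst hmn; simp
    · simp [hmn, Nat.lt_asymm hmn, (Nat.ne_of_lt hmn).symm]
  calc ∑ m ∈ J, ∑ n ∈ J, (c X h m n : ℝ) * g a m n
      = ∑ m ∈ J, ∑ n ∈ J,
          ((if n < m then (c X h m n : ℝ) * g a m n else 0)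
            + (if m = n then (c X h m n : ℝ) * g a m n else 0)
            + (if m < n then (c X h m n : ℝ) * g a m n else 0)) := by
        exact Finset.sum_congr rfl fun m hm => Finset.sum_congr rfl fun n hn => tri m hm n hn
    _ = (∑ m ∈ J, ∑ n ∈ J, if n < m then (c X h m n : ℝ) * g a m n else 0)
        + (∑ m ∈ J, ∑ n ∈ J, if m = n then (c X h m n : ℝ) * g a m n else 0)
        + (∑ m ∈ J, ∑ n ∈ J, if m < n then (c X h m n : ℝ) * g a m n else 0) := by
        simp [Finset.sum_add_distrib]
    _ = (∑ n ∈ J, (c X h n n : ℝ) * g a n n)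
        + 2 * ∑ m ∈ J, ∑ n ∈ J, (if m < n then (c X h m n : ℝ) * g a m n else 0) := by
        have e1 : (∑ m ∈ J, ∑ n ∈ J, if m = n then (c X h m n : ℝ) * g a m n else 0)
            = ∑ n ∈ J, (c X h n n : ℝ) * g a n n := by
          refine Finset.sum_congr rfl fun m hm => ?_
          rw [Finset.sum_ite_eq J m (fun n => (c X h m n : ℝ) * g a m n), if_pos hm]
        have e2 : (∑ m ∈ J, ∑ n ∈ J, if n < m then (c X h m n : ℝ) * g a m n else 0)
            = ∑ m ∈ J, ∑ n ∈ J, if m < n then (c X h m n : ℝ) * g a m n else 0 := by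
          rw [Finset.sum_comm]
          exact Finset.sum_congr rfl fun m _ => Finset.sum_congr rfl fun n _ => by
            rw [F_symm]
        rw [e1, e2]; ring
    _ = _ := by
        congr 1
        rw [Finset.sum_comm (s := Icc 1 h)]
        refine congrArg (2 * ·) (Finset.sum_congr rfl fun m hm => ?_)
        simp only [hJ, mem_Icc] at hm
        rw [← Finset.sum_filter]
        have hs1 : ∑ n ∈ J.filter (fun n => m < n), (c X h m n : ℝ) * g a m n
            = ∑ n ∈ (J.filter (fun n => m < n)) ∩ Icc (m+1) (m+h),
                (c X h m n : ℝ) * g a m n := by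
          refine (Finset.sum_subset Finset.inter_subset_left fun n hn hn2 => ?_).symm
          simp only [hJ, mem_inter, mem_filter, mem_Icc] at hn hn2
          rw [c_zero X h m n (by omega)]
          simp
        have hs2 : ∑ n ∈ (J.filter (fun n => m < n)) ∩ Icc (m+1) (m+h),
              (c X h m n : ℝ) * g a m n
            = ∑ n ∈ Icc (m+1) (m+h), (c X h m n : ℝ) * g a m n := by
          refine Finset.sum_subset Finset.inter_subset_right fun n hn hn2 => ?_
          simp only [hJ, mem_inter, mem_filter, mem_Icc] at hn hn2
          rw [c_zero X h m n (by omega)]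
          simp
        rw [hs1, hs2, show Icc (m+1) (m+h) = Finset.map (addLeftEmbedding m) (Icc 1 h) from
          (Finset.map_add_left_Icc 1 h m).symm, Finset.sum_map]
        simp [addLeftEmbedding_apply]

end Stmt8Aux

open Stmt8Aux in
theorem stmt_8 (a : ℕ → ℂ) (X h : ℕ) (hh : 1 ≤ h) (hX : h + 2 ≤ X) :
    |∑ l ∈ Finset.Icc 1 h, ((h + 1 - l : ℕ) : ℝ) *
        (2 * (∑ n ∈ Finset.Icc (X + h) (2 * X), a n * (starRingEnd ℂ) (a (n + l))).re)|
      ≤ (∑ x ∈ Finset.Icc X (2 * X),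
            (‖∑ n ∈ Finset.Icc x (x + h), a n‖) ^ 2)
        + ((h : ℝ) + 1) * ∑ n ∈ Finset.Icc X (2 * X + h), (‖a n‖) ^ 2
        + 12 * ((h : ℝ) + 1) ^ 3 *
            (Finset.Icc X (2 * X + h)).sup'
              (Finset.nonempty_Icc.mpr (by omega))
              (fun n => (‖a n‖) ^ 2) := by
  have hne : (Finset.Icc X (2 * X + h)).Nonempty := Finset.nonempty_Icc.mpr (by omega)
  set M : ℝ := (Finset.Icc X (2 * X + h)).sup' hne (fun n => (‖a n‖) ^ 2)
    with hMdef
  have hMn : ∀ n ∈ Icc X (2*X+h), ‖a n‖ ^ 2 ≤ M := fun n hn =>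
    Finset.le_sup' (fun n => (‖a n‖) ^ 2) hn
  have hM0 : 0 ≤ M :=
    le_trans (sq_nonneg _) (hMn X (by simp only [mem_Icc]; omega))
  set A : ℝ := ∑ x ∈ Finset.Icc X (2 * X),
      (‖∑ n ∈ Finset.Icc x (x + h), a n‖) ^ 2 with hAdef
  set D : ℝ := ∑ n ∈ Icc X (2*X+h), (c X h n n : ℝ) * g a n n with hDdef
  set Tw : ℝ := ∑ l ∈ Icc 1 h, ((h + 1 - l : ℕ) : ℝ) *
      ∑ n ∈ Icc (X+h) (2*X), g a n (n+l) with hTwdef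
  set B : Finset ℕ := Icc X (2*X+h) \ Icc (X+h) (2*X) with hBdef
  set E : ℝ := ∑ l ∈ Icc 1 h, ∑ m ∈ B, (c X h m (m+l) : ℝ) * g a m (m+l) with hEdef
  -- rewrite the LHS as |2 * Tw|
  have hL : ∑ l ∈ Finset.Icc 1 h, ((h + 1 - l : ℕ) : ℝ) *
        (2 * (∑ n ∈ Finset.Icc (X + h) (2 * X), a n * (starRingEnd ℂ) (a (n + l))).re)
      = 2 * Tw := by
    rw [hTwdef, Finset.mul_sum]
    refine Finset.sum_congr rfl fun l _ => ?_
    rw [Complex.re_sum]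
    unfold g
    ring
  -- the key identity
  have hsub2 : Icc (X+h) (2*X) ⊆ Icc X (2*X+h) :=
    Finset.Icc_subset_Icc (by omega) (by omega)
  have hkey : A = D + 2 * (Tw + E) := by
    rw [hAdef, step1 a X h, step2 a X h, hDdef]
    congr 1
    rw [hTwdef, hEdef, ← Finset.sum_add_distrib]
    refine congrArg (2 * ·) (Finset.sum_congr rfl fun l hl => ?_)
    rw [← Finset.sum_inter_add_sum_sdiff (Icc X (2*X+h)) (Icc (X+h) (2*X))
        (fun m => (c X h m (m+l) : ℝ) * g a m (m+l)),
      Finset.inter_eq_right.mpr hsub2, hBdef]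
    congr 1
    rw [Finset.mul_sum]
    exact Finset.sum_congr rfl fun m hm => by rw [c_main X h l hl m hm, g_symm]
  -- nonnegativity
  have hA0 : 0 ≤ A := by
    rw [hAdef]; exact Finset.sum_nonneg fun x _ => sq_nonneg _
  have hD0 : 0 ≤ D := by
    rw [hDdef]
    refine Finset.sum_nonneg fun n _ => mul_nonneg (Nat.cast_nonneg _) ?_
    rw [g_diag]; exact sq_nonneg _
  -- diagonal bound
  have hD1 : D ≤ ((h : ℝ) + 1) * ∑ n ∈ Finset.Icc X (2 * X + h), (‖a n‖) ^ 2 := by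
    rw [hDdef, Finset.mul_sum]
    refine Finset.sum_le_sum fun n _ => ?_
    rw [g_diag]
    have : (c X h n n : ℝ) ≤ (h : ℝ) + 1 := by
      have := c_le X h n n
      push_cast
      exact_mod_cast this
    exact mul_le_mul_of_nonneg_right this (sq_nonneg _)
  -- boundary bound
  have hterm : ∀ m ∈ B, ∀ l ∈ Icc 1 h,
      |(c X h m (m+l) : ℝ) * g a m (m+l)| ≤ ((h : ℝ) + 1) * M := by
    intro m hm l hl
    rw [hBdef] at hm
    simp only [mem_sdiff, mem_Icc] at hm hl
    by_cases hml : m + l ≤ 2*X + h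
    · have b1 : ‖a m‖ ^ 2 ≤ M := hMn m (by simp only [mem_Icc]; omega)
      have b2 : ‖a (m+l)‖ ^ 2 ≤ M := hMn (m+l) (by simp only [mem_Icc]; omega)
      have hg : |g a m (m+l)| ≤ ‖a m‖ * ‖a (m+l)‖ := g_abs_le a m (m+l)
      have habM : ‖a m‖ * ‖a (m+l)‖ ≤ M := by
        nlinarith [norm_nonneg (a m), norm_nonneg (a (m+l))]
      have hc : (c X h m (m+l) : ℝ) ≤ (h : ℝ) + 1 := by
        have := c_le X h m (m+l)
        exact_mod_cast this
      calc |(c X h m (m+l) : ℝ) * g a m (m+l)|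
          = (c X h m (m+l) : ℝ) * |g a m (m+l)| := by
            rw [abs_mul, abs_of_nonneg (Nat.cast_nonneg _)]
        _ ≤ ((h : ℝ) + 1) * M := by
            apply mul_le_mul hc (hg.trans habM) (abs_nonneg _)
            positivity
    · rw [c_zero X h m (m+l) (Or.inr (by omega))]
      simp only [Nat.cast_zero, zero_mul, abs_zero]
      positivity
  have hcardB : (B.card : ℝ) = 2 * (h : ℝ) := by
    rw [hBdef, Finset.card_sdiff_of_subset hsub2, Nat.card_Icc, Nat.card_Icc]
    push_cast [show 2*X + h + 1 - X = X + h + 1 by omega,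
      show 2*X + 1 - (X + h) = X + 1 - h by omega,
      show X + 1 - h = X + 1 - h by rfl]
    have : X + h + 1 - (X + 1 - h) = 2 * h := by omega
    exact_mod_cast congrArg (Nat.cast : ℕ → ℝ) this
  have hE1 : |E| ≤ (h : ℝ) * (2 * (h : ℝ) * (((h : ℝ) + 1) * M)) := by
    rw [hEdef]
    calc |∑ l ∈ Icc 1 h, ∑ m ∈ B, (c X h m (m+l) : ℝ) * g a m (m+l)|
        ≤ ∑ l ∈ Icc 1 h, |∑ m ∈ B, (c X h m (m+l) : ℝ) * g a m (m+l)| :=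
          Finset.abs_sum_le_sum_abs _ _
      _ ≤ ∑ l ∈ Icc 1 h, ∑ m ∈ B, |(c X h m (m+l) : ℝ) * g a m (m+l)| :=
          Finset.sum_le_sum fun l _ => Finset.abs_sum_le_sum_abs _ _
      _ ≤ ∑ l ∈ Icc 1 h, ∑ m ∈ B, ((h : ℝ) + 1) * M :=
          Finset.sum_le_sum fun l hl => Finset.sum_le_sum fun m hm => hterm m hm l hl
      _ = (h : ℝ) * (2 * (h : ℝ) * (((h : ℝ) + 1) * M)) := by
          rw [Finset.sum_const, Finset.sum_const, nsmul_eq_mul, nsmul_eq_mul, hcardB,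
            Nat.card_Icc, Nat.add_sub_cancel]
  -- final assembly
  rw [hL]
  have h2Tw : 2 * Tw = A - D - 2 * E := by linarith
  rw [h2Tw]
  have habs : |A - D - 2 * E| ≤ A + D + 2 * |E| := by
    rw [abs_le]
    constructor
    · have := le_abs_self E
      have := neg_abs_le E
      linarith
    · have := le_abs_self E
      have := neg_abs_le E
      linarith
  refine habs.trans ?_
  have hE2 : 2 * |E| ≤ 12 * ((h : ℝ) + 1) ^ 3 * M := by
    have hh' : (1 : ℝ) ≤ (h : ℝ) := by exact_mod_cast hh
    have key : (4 * (h : ℝ)^2 * ((h : ℝ) + 1)) ≤ 12 * ((h : ℝ) + 1)^3 := by nlinarith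
    have key2 := mul_le_mul_of_nonneg_right key hM0
    nlinarith [hE1, abs_nonneg E]
  have : A + D + 2 * |E|
      ≤ A + ((h : ℝ) + 1) * ∑ n ∈ Finset.Icc X (2 * X + h), (‖a n‖) ^ 2
        + 12 * ((h : ℝ) + 1) ^ 3 * M := by
    linarith
  exact this
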